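/- arXiv:1705.00599 — 3 statements merged into one kernel-verified Lean document; each statement's English description precedes it below -/
import Mathlib

section
/- For m > 0 and nonzero vectors η, ξ ∈ ℝⁿ with choices of signs ±₁, ±₂ ∈ {+1,−1}, the quantity |⟨ξ⟩_m − (±₁η)·(±₂ξ)/|η|| is bounded above by a constant times m + |ξ|·∠(±₁η, ±₂ξ), where ⟨ξ⟩_m = (m² + |ξ|²)^{1/2}. -/
open MeasureTheory Complex InnerProductGeometry
open scoped FourierTransform ENNReal RealInnerProductSpace

noncomputable section

abbrev ES (n : ℕ) := EuclideanSpace ℝ (Fin n)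

/-- spatial part of a spacetime frequency -/
def spart {n : ℕ} (z : ES (n+1)) : ES n := WithLp.toLp 2 (fun i : Fin n => z i.succ)

/-- inhomogeneous Sobolev norm via Fourier transform, ℝ≥0∞-valued -/
def sobolevNormE (n : ℕ) (s : ℝ) (f : ES n → ℂ) : ℝ≥0∞ :=
  (∫⁻ ξ : ES n, ENNReal.ofReal ((1 + ‖ξ‖^2) ^ s) * ((‖𝓕 f ξ‖₊ : ℝ≥0∞)) ^ 2) ^ (1/2 : ℝ)

/-- wave-Sobolev norm `H^{s,b}` on spacetime `ℝ^{1+n}` -/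
def waveNormE (n : ℕ) (s b : ℝ) (u : ES (n+1) → ℂ) : ℝ≥0∞ :=
  (∫⁻ z : ES (n+1), ENNReal.ofReal ((1 + ‖spart z‖^2) ^ s *
      (1 + (|z 0| - ‖spart z‖)^2) ^ b) * ((‖𝓕 u z‖₊ : ℝ≥0∞)) ^ 2) ^ (1/2 : ℝ)

/-- Fourier multiplier operator -/
def fmul {n : ℕ} (m : ES n → ℂ) (f : ES n → ℂ) : ES n → ℂ :=
  fun x => 𝓕⁻ (fun ξ => m ξ * 𝓕 f ξ) x

/-- partial derivative in the `k`-th coordinate direction -/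
def pdx {n : ℕ} {F : Type*} [NormedAddCommGroup F] [NormedSpace ℝ F]
    (k : Fin n) (f : ES n → F) (x : ES n) : F :=
  fderiv ℝ f x (EuclideanSpace.single k 1)

/-- japanese bracket of a real number -/
def jb (x : ℝ) : ℝ := Real.sqrt (1 + x^2)

/-- japanese bracket of a vector -/
def jbv {n : ℕ} (x : ES n) : ℝ := Real.sqrt (1 + ‖x‖^2)

/-
Writing θ for the angle between ±₁η and ±₂ξ, the inner product term is ‖ξ‖ cos θ, and
0 ≤ √(m² + ‖ξ‖²) − ‖ξ‖ ≤ m together with 0 ≤ 1 − cos θ ≤ θ give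
0 ≤ √(m² + ‖ξ‖²) − ‖ξ‖ cos θ ≤ m + ‖ξ‖ θ, i.e. the bound with C = 1.
-/

namespace Real

theorem one_sub_cos_le_self {x : ℝ} (hx : 0 ≤ x) : 1 - cos x ≤ x := by
  by_cases h : x ≤ 2
  · nlinarith [one_sub_sq_div_two_le_cos (x := x)]
  · linarith [neg_one_le_cos x]

theorem sqrt_sq_add_sq_le_add {a b : ℝ} (ha : 0 ≤ a) (hb : 0 ≤ b) : √(a ^ 2 + b ^ 2) ≤ a + b :=
  (sqrt_le_left (add_nonneg ha hb)).2 (by nlinarith)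

theorem le_sqrt_sq_add_sq (a : ℝ) {b : ℝ} (hb : 0 ≤ b) : b ≤ √(a ^ 2 + b ^ 2) :=
  (le_sqrt hb (by positivity)).2 (by nlinarith)

theorem abs_sqrt_sq_add_sq_sub_cos_mul_le {m r θ : ℝ} (hm : 0 ≤ m) (hr : 0 ≤ r) (hθ : 0 ≤ θ) :
    |√(m ^ 2 + r ^ 2) - cos θ * r| ≤ m + r * θ := by
  have hcos : (1 - cos θ) * r ≤ θ * r := mul_le_mul_of_nonneg_right (one_sub_cos_le_self hθ) hr
  have hsqrt_le := sqrt_sq_add_sq_le_add hm hr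
  have hsqrt_ge := le_sqrt_sq_add_sq m hr
  rw [abs_le]
  constructor <;> nlinarith [cos_le_one θ]

end Real

namespace InnerProductGeometry

theorem inner_div_norm_eq_cos_angle_mul_norm {V : Type*} [NormedAddCommGroup V]
    [InnerProductSpace ℝ V] (x y : V) : ⟪x, y⟫ / ‖x‖ = Real.cos (angle x y) * ‖y‖ := by
  rw [← cos_angle_mul_norm_mul_norm]
  rcases eq_or_ne x 0 with rfl | hx
  · simp
  · field_simp [norm_ne_zero_iff.2 hx]

end InnerProductGeometry

theorem norm_smul_of_abs_eq_one {E : Type*} [SeminormedAddCommGroup E] [NormedSpace ℝ E]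
    {ε : ℝ} (hε : |ε| = 1) (x : E) : ‖ε • x‖ = ‖x‖ := by
  rw [norm_smul, Real.norm_eq_abs, hε, one_mul]

/-- Symbol bound for the bilinear operator `𝒜_{(±₁,±₂)}` (Selberg–Tesfahun, Lemma 3.1):
`|⟨ξ⟩_m − (±₁η)·(±₂ξ)/|η|| ≲ m + |ξ| ∠(±₁η, ±₂ξ)`. -/
theorem symbol_bound_A :
    ∃ C : ℝ, 0 < C ∧ ∀ (n : ℕ) (m : ℝ), 0 < m → ∀ (η ξ : ES n), η ≠ 0 → ξ ≠ 0 →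
      ∀ ε₁ ε₂ : ℝ, (ε₁ = 1 ∨ ε₁ = -1) → (ε₂ = 1 ∨ ε₂ = -1) →
        |Real.sqrt (m^2 + ‖ξ‖^2) - ⟪ε₁ • η, ε₂ • ξ⟫ / ‖η‖| ≤
          C * (m + ‖ξ‖ * angle (ε₁ • η) (ε₂ • ξ)) := by
  refine ⟨1, one_pos, fun n m hm η ξ _ _ ε₁ ε₂ hε₁ hε₂ => ?_⟩
  have hη := norm_smul_of_abs_eq_one ((abs_eq zero_le_one).2 hε₁) η
  have hξ := norm_smul_of_abs_eq_one ((abs_eq zero_le_one).2 hε₂) ξ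
  rw [one_mul, ← hη, inner_div_norm_eq_cos_angle_mul_norm, hξ]
  exact Real.abs_sqrt_sq_add_sq_sub_cos_mul_le hm.le (norm_nonneg ξ) (angle_nonneg _ _)
end
end

section
/- For m > 0 and nonzero η, ξ ∈ ℝⁿ and signs ±₁, ±₂, the symbol b_{±₁,±₂}(η,ξ) = ⟨η⟩_m(±₂ξ) − ⟨ξ⟩_m(±₁η) satisfies |b_{±₁,±₂}(η,ξ)| ≲ m(|η|+|ξ|) + |η||ξ|·∠(±₁η,±₂ξ). -/
open MeasureTheory Complex InnerProductGeometry
open scoped FourierTransform ENNReal RealInnerProductSpace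

noncomputable section

/-!
Write `a = ±₁η`, `b = ±₂ξ`, `A = ⟨a⟩_m`, `B = ⟨b⟩_m`, and split
`A b - B a = (A - |a|) b + (|a| b - |b| a) + (|b| - B) a`.
The outer terms are at most `m|b|` and `m|a|` since `0 ≤ ⟨r⟩_m - r ≤ m`. The middle term is the chord
between `a/|a|` and `b/|b|` scaled by `|a||b|`: its square is `2|a|²|b|²(1 - cos θ) ≤ |a|²|b|²θ²`.
So the bound holds with constant 1.
-/

lemma abs_sqrt_sq_add_sq_sub_le (m : ℝ) {r : ℝ} (hr : 0 ≤ r) :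
    |Real.sqrt (m ^ 2 + r ^ 2) - r| ≤ |m| := by
  have hupper : Real.sqrt (m ^ 2 + r ^ 2) ≤ |m| + r :=
    Real.sqrt_le_iff.mpr ⟨by positivity, by nlinarith [sq_abs m, abs_nonneg m]⟩
  have hlower : r ≤ Real.sqrt (m ^ 2 + r ^ 2) :=
    Real.le_sqrt_of_sq_le (by nlinarith [sq_nonneg m])
  rw [abs_le]
  constructor <;> linarith [abs_nonneg m]

section InnerProductSpace

variable {E : Type*} [NormedAddCommGroup E] [InnerProductSpace ℝ E]

lemma norm_norm_smul_sub_norm_smul_le (a b : E) :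
    ‖‖a‖ • b - ‖b‖ • a‖ ≤ ‖a‖ * ‖b‖ * angle a b := by
  have hcos : 1 - angle a b ^ 2 / 2 ≤ Real.cos (angle a b) := Real.one_sub_sq_div_two_le_cos
  have hsq : ‖‖a‖ • b - ‖b‖ • a‖ ^ 2 = 2 * (‖a‖ * ‖b‖) ^ 2 * (1 - Real.cos (angle a b)) := by
    rw [norm_sub_sq_real, real_inner_smul_left, real_inner_smul_right, real_inner_comm,
      ← cos_angle_mul_norm_mul_norm, norm_smul, norm_smul, Real.norm_of_nonneg (norm_nonneg a),
      Real.norm_of_nonneg (norm_nonneg b)]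
    ring
  refine le_of_pow_le_pow_left₀ two_ne_zero
    (mul_nonneg (by positivity) (angle_nonneg a b)) ?_
  calc ‖‖a‖ • b - ‖b‖ • a‖ ^ 2 = 2 * (‖a‖ * ‖b‖) ^ 2 * (1 - Real.cos (angle a b)) := hsq
    _ ≤ 2 * (‖a‖ * ‖b‖) ^ 2 * (angle a b ^ 2 / 2) := by gcongr; linarith
    _ = (‖a‖ * ‖b‖ * angle a b) ^ 2 := by ring

lemma norm_sqrt_smul_sub_sqrt_smul_le (m : ℝ) (a b : E) :
    ‖Real.sqrt (m ^ 2 + ‖a‖ ^ 2) • b - Real.sqrt (m ^ 2 + ‖b‖ ^ 2) • a‖ ≤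
      |m| * (‖a‖ + ‖b‖) + ‖a‖ * ‖b‖ * angle a b := by
  set A := Real.sqrt (m ^ 2 + ‖a‖ ^ 2)
  set B := Real.sqrt (m ^ 2 + ‖b‖ ^ 2)
  have hA : |A - ‖a‖| ≤ |m| := abs_sqrt_sq_add_sq_sub_le m (norm_nonneg a)
  have hB : |B - ‖b‖| ≤ |m| := abs_sqrt_sq_add_sq_sub_le m (norm_nonneg b)
  have hsplit : A • b - B • a = (A - ‖a‖) • b + (‖a‖ • b - ‖b‖ • a) - (B - ‖b‖) • a := by
    module
  calc ‖A • b - B • a‖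
      ≤ ‖(A - ‖a‖) • b‖ + ‖‖a‖ • b - ‖b‖ • a‖ + ‖(B - ‖b‖) • a‖ := by
        rw [hsplit]; exact (norm_sub_le _ _).trans (by gcongr; exact norm_add_le _ _)
    _ ≤ |m| * ‖b‖ + ‖a‖ * ‖b‖ * angle a b + |m| * ‖a‖ := by
        rw [norm_smul, norm_smul, Real.norm_eq_abs, Real.norm_eq_abs]
        gcongr
        exact norm_norm_smul_sub_norm_smul_le a b
    _ = |m| * (‖a‖ + ‖b‖) + ‖a‖ * ‖b‖ * angle a b := by ring

end InnerProductSpace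

lemma norm_smul_of_eq_one_or_eq_neg_one {E : Type*} [SeminormedAddCommGroup E] [NormedSpace ℝ E]
    {ε : ℝ} (hε : ε = 1 ∨ ε = -1) (x : E) : ‖ε • x‖ = ‖x‖ := by
  rcases hε with rfl | rfl <;> simp

/-- Symbol bound for the null form `ℬ_{±₁,±₂}` (Selberg–Tesfahun, Lemma 3.2):
`|⟨η⟩_m(±₂ξ) − ⟨ξ⟩_m(±₁η)| ≲ m(|η|+|ξ|) + |η||ξ| ∠(±₁η,±₂ξ)`. -/
theorem symbol_bound_B :
    ∃ C : ℝ, 0 < C ∧ ∀ (n : ℕ) (m : ℝ), 0 < m → ∀ (η ξ : ES n), η ≠ 0 → ξ ≠ 0 →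
      ∀ ε₁ ε₂ : ℝ, (ε₁ = 1 ∨ ε₁ = -1) → (ε₂ = 1 ∨ ε₂ = -1) →
        ‖Real.sqrt (m^2 + ‖η‖^2) • (ε₂ • ξ) - Real.sqrt (m^2 + ‖ξ‖^2) • (ε₁ • η)‖ ≤
          C * (m * (‖η‖ + ‖ξ‖) + ‖η‖ * ‖ξ‖ * angle (ε₁ • η) (ε₂ • ξ)) := by
  refine ⟨1, one_pos, fun n m hm η ξ _ _ ε₁ ε₂ hε₁ hε₂ => ?_⟩
  have h := norm_sqrt_smul_sub_sqrt_smul_le m (ε₁ • η) (ε₂ • ξ)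
  rwa [norm_smul_of_eq_one_or_eq_neg_one hε₁, norm_smul_of_eq_one_or_eq_neg_one hε₂,
    abs_of_pos hm, ← one_mul (_ + _ * angle _ _)] at h
end
end

section
/- Let 0 ≤ α ≤ 1/2 and suppose the signs ±₁ and ±₂ are different. For real λ, μ and nonzero η, ξ ∈ ℝⁿ with η + ξ ≠ 0, ∠(±₁η, ±₂ξ) ≲ |η+ξ|^{1/2}/(|η|^{1/2}|ξ|^{1/2}) · min(|η|,|ξ|)^α ⟨(λ+μ) ± |η+ξ|⟩^{1/2−α} + (⟨λ ±₁ |η|⟩^{1/2} + ⟨μ ±₂ |ξ|⟩^{1/2}) / min(|η|,|ξ|)^{1/2}. -/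
/-! For different signs the angle is `θ = π - ∠(η, ξ)`, and `θ ≤ π sin (θ/2) = π cos (∠(η, ξ)/2)`,
where `cos² (∠(η, ξ)/2) = (|η+ξ|² - (|η| - |ξ|)²) / (4|η||ξ|) ≤ |η+ξ| δ / (|η||ξ|)` with the defect
`δ = (|η+ξ| - ||η| - |ξ||) / 2`. By the triangle inequality `δ ≤ min(|η|, |ξ|)`; and since the three
modulations `(λ+μ) ± |η+ξ|`, `λ ±₁ |η|`, `μ ±₂ |ξ|` combine to `±|η+ξ| ∓₁ (|η| - |ξ|)`, `2δ` is
bounded by the sum of their brackets. If `δ ≤ ⟨(λ+μ) ± |η+ξ|⟩`, interpolating between the two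
bounds on `δ` gives the first term; otherwise `δ ≤ ⟨λ ±₁ |η|⟩ + ⟨μ ±₂ |ξ|⟩`, and
`|η+ξ| ≤ |η| + |ξ|` gives the second. -/

open MeasureTheory Complex InnerProductGeometry
open scoped FourierTransform ENNReal RealInnerProductSpace

noncomputable section

open Real

lemma abs_le_jb (x : ℝ) : |x| ≤ jb x :=
  abs_le_sqrt (by linarith)

lemma jb_nonneg (x : ℝ) : 0 ≤ jb x :=
  sqrt_nonneg _

lemma le_pi_mul_sin_half {t : ℝ} (h0 : 0 ≤ t) (hπ : t ≤ π) : t ≤ π * Real.sin (t / 2) := by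
  have hsin : 2 / π * (t / 2) ≤ Real.sin (t / 2) := mul_le_sin (by linarith) (by linarith)
  calc t = π * (2 / π * (t / 2)) := by field_simp
    _ ≤ π * Real.sin (t / 2) := by gcongr

lemma sqrt_add_le_sqrt_add_sqrt {p q : ℝ} (hp : 0 ≤ p) (hq : 0 ≤ q) : √(p + q) ≤ √p + √q := by
  rw [sqrt_le_iff]
  refine ⟨by positivity, ?_⟩
  nlinarith [sq_sqrt hp, sq_sqrt hq, mul_nonneg (sqrt_nonneg p) (sqrt_nonneg q)]

lemma rpow_add_le_mul_rpow_rpow {δ x y a b : ℝ} (hδ : 0 ≤ δ) (hx : δ ≤ x) (hy : δ ≤ y)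
    (ha : 0 ≤ a) (hb : 0 ≤ b) : δ ^ (a + b) ≤ x ^ a * y ^ b := by
  rw [rpow_add_of_nonneg hδ ha hb]
  exact mul_le_mul (rpow_le_rpow hδ hx ha) (rpow_le_rpow hδ hy hb) (rpow_nonneg hδ _)
    (rpow_nonneg (hδ.trans hx) _)

lemma sub_abs_sub_le_jb_add_jb_add_jb {A B N lam mu ε ε₁ ε₂ : ℝ} (hε : |ε| = 1)
    (hε₁ : |ε₁| = 1) (hε₂ : ε₂ = -ε₁) (hN : 0 ≤ N) :
    N - |A - B| ≤ jb (lam + ε₁ * A) + jb (mu + ε₂ * B) + jb (lam + mu + ε * N) := by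
  have hsum : (lam + mu + ε * N) - (lam + ε₁ * A) - (mu + ε₂ * B) = ε * N - ε₁ * (A - B) := by
    rw [hε₂]; ring
  have hgap : N - |A - B| ≤ |(lam + mu + ε * N) - (lam + ε₁ * A) - (mu + ε₂ * B)| := by
    rw [hsum]
    calc N - |A - B| = |ε * N| - |ε₁ * (A - B)| := by
          rw [abs_mul, abs_mul, hε, hε₁, abs_of_nonneg hN, one_mul, one_mul]
      _ ≤ |ε * N - ε₁ * (A - B)| := abs_sub_abs_le_abs_sub _ _
  linarith [abs_sub (lam + mu + ε * N - (lam + ε₁ * A)) (mu + ε₂ * B),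
    abs_sub (lam + mu + ε * N) (lam + ε₁ * A),
    abs_le_jb (lam + ε₁ * A), abs_le_jb (mu + ε₂ * B), abs_le_jb (lam + mu + ε * N)]

lemma sqrt_mul_div_le_of_le_min_of_le {A B N δ j α : ℝ} (hA : 0 < A) (hB : 0 < B) (hN : 0 ≤ N)
    (hδ : 0 ≤ δ) (hδm : δ ≤ min A B) (hδj : δ ≤ j) (hα0 : 0 ≤ α) (hα : α ≤ 1 / 2) :
    √(N * δ / (A * B)) ≤
      N ^ (1 / 2 : ℝ) / (A ^ (1 / 2 : ℝ) * B ^ (1 / 2 : ℝ)) * (min A B ^ α * j ^ (1 / 2 - α)) := by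
  have hinterp : δ ^ (1 / 2 : ℝ) ≤ min A B ^ α * j ^ (1 / 2 - α) := by
    simpa using rpow_add_le_mul_rpow_rpow hδ hδm hδj hα0 (sub_nonneg.2 hα)
  rw [sqrt_eq_rpow, div_rpow (by positivity) (by positivity), mul_rpow hN hδ,
    mul_rpow hA.le hB.le, mul_div_right_comm]
  gcongr

lemma sqrt_mul_div_le_of_le_add {A B N δ p q : ℝ} (hA : 0 < A) (hB : 0 < B) (hN : N ≤ A + B)
    (hδ : 0 ≤ δ) (hp : 0 ≤ p) (hq : 0 ≤ q) (hδpq : δ ≤ p + q) :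
    √(N * δ / (A * B)) ≤ √2 * ((p ^ (1 / 2 : ℝ) + q ^ (1 / 2 : ℝ)) / min A B ^ (1 / 2 : ℝ)) := by
  have hm : 0 < min A B := lt_min hA hB
  have hmin : (A + B) * min A B ≤ 2 * (A * B) := by
    rcases min_cases A B with ⟨h, h'⟩ | ⟨h, h'⟩ <;> rw [h] <;> nlinarith
  have hquot : N * δ / (A * B) ≤ 2 * (p + q) / min A B := by
    rw [div_le_div_iff₀ (by positivity) hm]
    calc N * δ * min A B ≤ (A + B) * (p + q) * min A B := by gcongr
      _ = (p + q) * ((A + B) * min A B) := by ring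
      _ ≤ (p + q) * (2 * (A * B)) := by gcongr
      _ = 2 * (p + q) * (A * B) := by ring
  calc √(N * δ / (A * B)) ≤ √(2 * (p + q) / min A B) := sqrt_le_sqrt hquot
    _ = √2 * (√(p + q) / √(min A B)) := by
      rw [sqrt_div' _ hm.le, sqrt_mul zero_le_two, mul_div_assoc]
    _ ≤ √2 * ((√p + √q) / √(min A B)) := by gcongr; exact sqrt_add_le_sqrt_add_sqrt hp hq
    _ = √2 * ((p ^ (1 / 2 : ℝ) + q ^ (1 / 2 : ℝ)) / min A B ^ (1 / 2 : ℝ)) := by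
      simp only [sqrt_eq_rpow]

section SeminormedAddCommGroup

variable {E : Type*} [SeminormedAddCommGroup E]

lemma abs_norm_sub_norm_le_norm_add (x y : E) : |‖x‖ - ‖y‖| ≤ ‖x + y‖ := by
  simpa using abs_norm_sub_norm_le x (-y)

lemma norm_add_sub_abs_norm_sub_norm_le (x y : E) : ‖x + y‖ - |‖x‖ - ‖y‖| ≤ 2 * min ‖x‖ ‖y‖ := by
  have := norm_add_le x y
  rcases le_total ‖x‖ ‖y‖ with h | h
  · rw [abs_of_nonpos (sub_nonpos.2 h), min_eq_left h]; linarith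
  · rw [abs_of_nonneg (sub_nonneg.2 h), min_eq_right h]; linarith

end SeminormedAddCommGroup

section InnerProductSpace

variable {V : Type*} [NormedAddCommGroup V] [InnerProductSpace ℝ V]

lemma angle_smul_neg_smul {c : ℝ} (hc : c ≠ 0) (x y : V) :
    angle (c • x) (-c • y) = π - angle x y := by
  rw [neg_smul, ← smul_neg, angle_smul_smul hc, angle_neg_right]

lemma pi_sub_angle_le {x y : V} (hx : x ≠ 0) (hy : y ≠ 0) :
    π - angle x y ≤
      π * √(‖x + y‖ * ((‖x + y‖ - |‖x‖ - ‖y‖|) / 2) / (‖x‖ * ‖y‖)) := by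
  have h0 := angle_nonneg x y
  have hπ := angle_le_pi x y
  have hA : 0 < ‖x‖ := norm_pos_iff.2 hx
  have hB : 0 < ‖y‖ := norm_pos_iff.2 hy
  have hsin := le_pi_mul_sin_half (sub_nonneg.2 hπ) (by linarith : π - angle x y ≤ π)
  rw [show (π - angle x y) / 2 = π / 2 - angle x y / 2 by ring, Real.sin_pi_div_two_sub,
    Real.cos_half (by linarith) hπ] at hsin
  refine hsin.trans (mul_le_mul_of_nonneg_left (sqrt_le_sqrt ?_) pi_pos.le)
  have hip := norm_add_sq_real x y
  rw [cos_angle]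
  field_simp
  nlinarith [sq_nonneg (‖x + y‖ - |‖x‖ - ‖y‖|), sq_abs (‖x‖ - ‖y‖)]

end InnerProductSpace

/-- Angle estimate (Lemma 2.1, estimate (angle2)) in the case of different signs `±₁ ≠ ±₂`:
`∠(±₁η, ±₂ξ) ≲ |η+ξ|^{1/2}/(|η|^{1/2}|ξ|^{1/2}) · min(|η|,|ξ|)^α ⟨(λ+μ) ± |η+ξ|⟩^{1/2−α}
  + (⟨λ ±₁ |η|⟩^{1/2} + ⟨μ ±₂ |ξ|⟩^{1/2})/min(|η|,|ξ|)^{1/2}`. -/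
theorem angle_estimate_two :
    ∃ C : ℝ, 0 < C ∧ ∀ (n : ℕ) (α : ℝ), 0 ≤ α → α ≤ 1/2 →
      ∀ ε ε₁ ε₂ : ℝ, (ε = 1 ∨ ε = -1) → (ε₁ = 1 ∨ ε₁ = -1) → (ε₂ = 1 ∨ ε₂ = -1) →
      ε₁ ≠ ε₂ →
      ∀ (lam mu : ℝ) (η ξ : ES n), η ≠ 0 → ξ ≠ 0 → η + ξ ≠ 0 →
        angle (ε₁ • η) (ε₂ • ξ) ≤
          C * (‖η + ξ‖ ^ ((1:ℝ)/2) / (‖η‖ ^ ((1:ℝ)/2) * ‖ξ‖ ^ ((1:ℝ)/2)) *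
                 ((min ‖η‖ ‖ξ‖) ^ α * jb ((lam + mu) + ε * ‖η + ξ‖) ^ ((1:ℝ)/2 - α)) +
               (jb (lam + ε₁ * ‖η‖) ^ ((1:ℝ)/2) + jb (mu + ε₂ * ‖ξ‖) ^ ((1:ℝ)/2)) /
                 (min ‖η‖ ‖ξ‖) ^ ((1:ℝ)/2)) := by
  refine ⟨2 * π, by positivity, ?_⟩
  intro n α hα0 hα ε ε₁ ε₂ hε hε₁ hε₂ hne lam mu η ξ hη hξ _
  have hε₂₁ : ε₂ = -ε₁ := by grind
  have hA : 0 < ‖η‖ := norm_pos_iff.2 hη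
  have hB : 0 < ‖ξ‖ := norm_pos_iff.2 hξ
  set δ := (‖η + ξ‖ - |‖η‖ - ‖ξ‖|) / 2 with hδ_def
  have hδ : 0 ≤ δ := by linarith [abs_norm_sub_norm_le_norm_add η ξ]
  have hδm : δ ≤ min ‖η‖ ‖ξ‖ := by linarith [norm_add_sub_abs_norm_sub_norm_le η ξ]
  have hδjb := sub_abs_sub_le_jb_add_jb_add_jb (A := ‖η‖) (B := ‖ξ‖) (lam := lam) (mu := mu)
    ((abs_eq zero_le_one).2 hε) ((abs_eq zero_le_one).2 hε₁) hε₂₁ (norm_nonneg (η + ξ))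
  set T₁ := ‖η + ξ‖ ^ ((1:ℝ)/2) / (‖η‖ ^ ((1:ℝ)/2) * ‖ξ‖ ^ ((1:ℝ)/2)) *
    ((min ‖η‖ ‖ξ‖) ^ α * jb ((lam + mu) + ε * ‖η + ξ‖) ^ ((1:ℝ)/2 - α))
  set T₂ := (jb (lam + ε₁ * ‖η‖) ^ ((1:ℝ)/2) + jb (mu + ε₂ * ‖ξ‖) ^ ((1:ℝ)/2)) /
    (min ‖η‖ ‖ξ‖) ^ ((1:ℝ)/2)
  have hT₁ : 0 ≤ T₁ := by simp only [T₁, jb]; positivity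
  have hT₂ : 0 ≤ T₂ := by simp only [T₂, jb]; positivity
  rw [hε₂₁, angle_smul_neg_smul (by rintro rfl; norm_num at hε₁)]
  refine (pi_sub_angle_le hη hξ).trans ?_
  rcases le_or_gt δ (jb (lam + mu + ε * ‖η + ξ‖)) with hc | hc
  · calc π * √(‖η + ξ‖ * δ / (‖η‖ * ‖ξ‖)) ≤ π * T₁ := by
          gcongr; exact sqrt_mul_div_le_of_le_min_of_le hA hB (norm_nonneg _) hδ hδm hc hα0 hα
      _ ≤ 2 * π * (T₁ + T₂) := by nlinarith [pi_pos]
  · calc π * √(‖η + ξ‖ * δ / (‖η‖ * ‖ξ‖)) ≤ π * (√2 * T₂) := by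
          gcongr
          exact sqrt_mul_div_le_of_le_add hA hB (norm_add_le η ξ) hδ (jb_nonneg _) (jb_nonneg _)
            (by linarith)
      _ ≤ π * (2 * T₂) := by gcongr; linarith [sqrt_two_lt_three_halves]
      _ ≤ 2 * π * (T₁ + T₂) := by nlinarith [pi_pos]
end
end
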